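/- Let p ≥ 1 be an integer and let a_1,…,a_p be nonnegative reals with Σ_{i=1}^p a_i > 0. Suppose there is no x ∈ {−1, 1}^p with Σ_{i=1}^p a_i x_i = (1/2)·Σ_{i=1}^p a_i. Then for every (β, β₀) ∈ ℝ^p × ℝ, G(β, β₀) > p + 100p². -/

import Mathlib

/-- `θ(x, β₀) = (max{0, x + β₀} − 1)² + (max{0, −x + β₀} − 1)²`. -/
noncomputable def thetaFn (x β₀ : ℝ) : ℝ :=
  (max 0 (x + β₀) - 1) ^ 2 + (max 0 (-x + β₀) - 1) ^ 2

/-- The objective of the (ReLU) reduction instance. -/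
noncomputable def reluObj {p : ℕ} (a : Fin p → ℝ) (β : Fin p → ℝ) (β₀ : ℝ) : ℝ :=
  (max 0 (∑ i, a i * β i + β₀) - (1 / 2) * ∑ i, a i) ^ 2
  + (max 0 (2 * ∑ i, a i * β i + β₀) - ∑ i, a i) ^ 2
  + ∑ j, thetaFn (β j) β₀
  + (max 0 β₀ + 10 * p) ^ 2

/-!
If `β₀ ≥ 1/4`, the last term alone exceeds `p + 100 p²`. Otherwise every `θ`-term is at least `1`
and the last term at least `100 p²`, so `G ≤ p + 100 p²` forces both leading squares to vanish.
As `∑ aᵢ > 0`, the ReLUs are then active, which gives `β₀ = 0` and `∑ aᵢ βᵢ = ½ ∑ aᵢ`; finally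
`θ(x, 0) = (|x| - 1)² + 1`, so each `θ(βⱼ, 0) = 1` forces `βⱼ = ±1`, and `β` solves the instance.
-/

lemma one_le_thetaFn (x : ℝ) {b : ℝ} (hb : b ≤ 1 / 4) : 1 ≤ thetaFn x b := by
  unfold thetaFn
  rcases le_total (x + b) 0 with h₁ | h₁ <;> rcases le_total (-x + b) 0 with h₂ | h₂
  · rw [max_eq_left h₁, max_eq_left h₂]; norm_num
  · rw [max_eq_left h₁, max_eq_right h₂]; nlinarith
  · rw [max_eq_right h₁, max_eq_left h₂]; nlinarith
  · rw [max_eq_right h₁, max_eq_right h₂]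
    nlinarith [sq_nonneg (x + b - 1), sq_nonneg (-x + b - 1), sq_nonneg x]

lemma thetaFn_zero (x : ℝ) : thetaFn x 0 = (|x| - 1) ^ 2 + 1 := by
  unfold thetaFn
  rcases le_total 0 x with hx | hx
  · rw [abs_of_nonneg hx, max_eq_right (by linarith), max_eq_left (by linarith)]; ring
  · rw [abs_of_nonpos hx, max_eq_left (by linarith), max_eq_right (by linarith)]; ring

lemma eq_neg_one_or_eq_one_of_thetaFn_zero_eq_one {x : ℝ} (h : thetaFn x 0 = 1) :
    x = -1 ∨ x = 1 := by
  have habs : |x| = 1 := by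
    rw [thetaFn_zero] at h
    nlinarith [sq_nonneg (|x| - 1)]
  rcases abs_eq (zero_le_one' ℝ) |>.mp habs with hx | hx <;> simp [hx]

lemma natCast_le_sum_thetaFn {p : ℕ} (β : Fin p → ℝ) {β₀ : ℝ} (hβ₀ : β₀ ≤ 1 / 4) :
    (p : ℝ) ≤ ∑ j, thetaFn (β j) β₀ := by
  simpa using Finset.card_nsmul_le_sum Finset.univ _ 1 fun j _ => one_le_thetaFn (β j) hβ₀

lemma eq_of_max_zero_eq {t c : ℝ} (hc : 0 < c) (h : max 0 t = c) : t = c :=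
  ((max_eq_iff.mp h).resolve_left fun h' => hc.ne h'.1).1

section
variable {p : ℕ} (a β : Fin p → ℝ) {β₀ : ℝ}

lemma lt_reluObj_of_quarter_le (hβ₀ : 1 / 4 ≤ β₀) :
    (p : ℝ) + 100 * (p : ℝ) ^ 2 < reluObj a β β₀ := by
  have hθ : 0 ≤ ∑ j, thetaFn (β j) β₀ :=
    Finset.sum_nonneg fun j _ => by unfold thetaFn; positivity
  unfold reluObj
  rw [max_eq_right (show (0 : ℝ) ≤ β₀ by linarith)]
  nlinarith [sq_nonneg (max 0 (∑ i, a i * β i + β₀) - 1 / 2 * ∑ i, a i),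
    sq_nonneg (max 0 (2 * ∑ i, a i * β i + β₀) - ∑ i, a i), (p.cast_nonneg : (0 : ℝ) ≤ p)]

lemma eq_of_reluObj_le (hA : 0 < ∑ i, a i)
    (h : reluObj a β β₀ ≤ (p : ℝ) + 100 * (p : ℝ) ^ 2) :
    β₀ = 0 ∧ (∀ j, thetaFn (β j) 0 = 1) ∧ ∑ i, a i * β i = 1 / 2 * ∑ i, a i := by
  have hβ₀ : β₀ < 1 / 4 := lt_of_not_ge fun h' => (lt_reluObj_of_quarter_le a β h').not_ge h
  have hθ := natCast_le_sum_thetaFn β hβ₀.le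
  have hlast : 100 * (p : ℝ) ^ 2 ≤ (max 0 β₀ + 10 * p) ^ 2 := by
    nlinarith [le_max_left 0 β₀, (p.cast_nonneg : (0 : ℝ) ≤ p)]
  unfold reluObj at h
  set S := ∑ i, a i * β i
  set A := ∑ i, a i
  have e₁ : max 0 (S + β₀) - 1 / 2 * A = 0 := by
    nlinarith [sq_nonneg (max 0 (S + β₀) - 1 / 2 * A), sq_nonneg (max 0 (2 * S + β₀) - A)]
  have e₂ : max 0 (2 * S + β₀) - A = 0 := by
    nlinarith [sq_nonneg (max 0 (S + β₀) - 1 / 2 * A), sq_nonneg (max 0 (2 * S + β₀) - A)]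
  have hs₁ := eq_of_max_zero_eq (by linarith) (sub_eq_zero.mp e₁)
  have hs₂ := eq_of_max_zero_eq hA (sub_eq_zero.mp e₂)
  have hzero : β₀ = 0 := by linarith
  subst hzero
  refine ⟨rfl, fun j => ?_, by linarith⟩
  have hsum : ∑ j, thetaFn (β j) 0 = ∑ _j : Fin p, (1 : ℝ) := by
    simp only [Finset.sum_const, Finset.card_univ, Fintype.card_fin, nsmul_eq_mul, mul_one]
    nlinarith [sq_nonneg (max 0 (S + 0) - 1 / 2 * A), sq_nonneg (max 0 (2 * S + 0) - A)]
  exact ((Finset.sum_eq_sum_iff_of_le fun j _ => one_le_thetaFn (β j) (by norm_num)).mp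
    hsum.symm j (Finset.mem_univ j)).symm

end

theorem reluObj_gt_of_no_solution_general (p : ℕ)
    (a : Fin p → ℝ) (hsum : 0 < ∑ i, a i)
    (hno : ¬ ∃ x : Fin p → ℝ, (∀ i, x i = -1 ∨ x i = 1) ∧
      ∑ i, a i * x i = (1 / 2) * ∑ i, a i)
    (β : Fin p → ℝ) (β₀ : ℝ) :
    reluObj a β β₀ > (p : ℝ) + 100 * (p : ℝ) ^ 2 := by
  by_contra! h
  obtain ⟨-, hθ, hS⟩ := eq_of_reluObj_le a β hsum h
  exact hno ⟨β, fun i => eq_neg_one_or_eq_one_of_thetaFn_zero_eq_one (hθ i), hS⟩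

/-- for `p ≥ 1` and nonnegative reals `a₁,…,a_p` with `∑ a_i > 0`, if there
is no `x ∈ {−1,1}^p` with `∑ a_i x_i = ½ ∑ a_i`, then every `(β, β₀)` satisfies
`G(β, β₀) > p + 100 p²`. -/
theorem reluObj_gt_of_no_solution (p : ℕ) (hp : 1 ≤ p)
    (a : Fin p → ℝ) (ha : ∀ i, 0 ≤ a i) (hsum : 0 < ∑ i, a i)
    (hno : ¬ ∃ x : Fin p → ℝ, (∀ i, x i = -1 ∨ x i = 1) ∧
      ∑ i, a i * x i = (1 / 2) * ∑ i, a i)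
    (β : Fin p → ℝ) (β₀ : ℝ) :
    reluObj a β β₀ > (p : ℝ) + 100 * (p : ℝ) ^ 2 :=
  reluObj_gt_of_no_solution_general p a hsum hno β β₀
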